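/- arXiv:2505.04929 — 2 statements merged into one kernel-verified Lean document; each statement's English description precedes it below -/
import Mathlib

section
/- For all positive integers a, b, t with b ≥ 3, t ≥ 2 and 1 ≤ a ≤ (b choose 2), one has M(a+b, t·b) ≥ t·(M(a,b) + b) − b. -/
/-- Number of edges of a finite simple graph. -/
noncomputable def edgeCnt {V : Type} [Fintype V] (G : SimpleGraph V) : ℕ :=
  G.edgeSet.ncard

/-- Number of edges of `G` with both endpoints in `X`. -/
noncomputable def inducedEdgeCnt {V : Type} [Fintype V] (G : SimpleGraph V) (X : Finset V) : ℕ :=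
  {e : Sym2 V | e ∈ G.edgeSet ∧ ∀ v ∈ e, v ∈ X}.ncard

/-- Maximum average degree of a finite simple graph. -/
noncomputable def Mad {V : Type} [Fintype V] (G : SimpleGraph V) : ℝ :=
  sSup {d : ℝ | ∃ X : Finset V, X.Nonempty ∧ d = 2 * (inducedEdgeCnt G X : ℝ) / (X.card : ℝ)}

/-- A `k`-decomposition of the complete graph `K_n`. -/
def IsKDecomp {k n : ℕ} (G : Fin k → SimpleGraph (Fin n)) : Prop :=
  (∀ i j, i ≠ j → Disjoint (G i).edgeSet (G j).edgeSet) ∧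
  (⋃ i, (G i).edgeSet) = (⊤ : SimpleGraph (Fin n)).edgeSet

/-- `M(k,n)`: maximum of `Mad(G_1)+…+Mad(G_k)` over all `k`-decompositions of `K_n`. -/
noncomputable def MSum (k n : ℕ) : ℝ :=
  sSup {s : ℝ | ∃ G : Fin k → SimpleGraph (Fin n), IsKDecomp G ∧ s = ∑ i, Mad (G i)}

/-- `M^L(k,N)`: maximum of `Mad(G_1)+…+Mad(G_k)` over all lists of `k` finite graphs
with `N` edges in total. -/
noncomputable def MSumL (k N : ℕ) : ℝ :=
  sSup {s : ℝ | ∃ (V : Fin k → Type) (hV : ∀ i, Fintype (V i)) (G : ∀ i, SimpleGraph (V i)),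
    (∑ i, @edgeCnt (V i) (hV i) (G i)) = N ∧ s = ∑ i, @Mad (V i) (hV i) (G i)}

/-- `g(m)`: maximum of `Mad(G)` over all finite simple graphs with exactly `m` edges. -/
noncomputable def gMax (m : ℕ) : ℝ :=
  sSup {d : ℝ | ∃ (V : Type) (hV : Fintype V) (G : SimpleGraph V),
    @edgeCnt V hV G = m ∧ d = @Mad V hV G}

/-- The complete graph on the vertex subset `S` inside `Fin n`. -/
def cliqueOn {n : ℕ} (S : Finset (Fin n)) : SimpleGraph (Fin n) :=
  SimpleGraph.fromRel (fun a b => a ∈ S ∧ b ∈ S)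

/-! Blow every vertex of `K_b` up into `t` vertices: on `Fin (t * b)` these are the fibres of
`Fin.modNat`. Pulling the `a` colour classes of a decomposition of `K_b` back along the blow-up
multiplies every `Mad` by at least `t`, because induced edge counts scale by `t²` and vertex counts
by `t`. The edges left uncovered are exactly those inside the fibres, and the `b` fibre cliques
`K_t` each have `Mad ≥ t - 1`. Hence `M(a + b, t b) ≥ t M(a, b) + b (t - 1)`. -/

open Finset

section Mad

variable {V : Type} [Fintype V]

def induceOn (G : SimpleGraph V) (X : Finset V) : SimpleGraph V where
  Adj x y := G.Adj x y ∧ x ∈ X ∧ y ∈ X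
  symm := ⟨fun _ _ h => ⟨h.1.symm, h.2.2, h.2.1⟩⟩
  loopless := ⟨fun _ h => G.irrefl h.1⟩

lemma inducedEdgeCnt_eq_ncard_induceOn (G : SimpleGraph V) (X : Finset V) :
    inducedEdgeCnt G X = (induceOn G X).edgeSet.ncard := by
  unfold inducedEdgeCnt
  congr 1
  ext e
  induction e with
  | _ x y => simp [induceOn]

lemma two_mul_inducedEdgeCnt [DecidableEq V] (G : SimpleGraph V) [DecidableRel G.Adj]
    (X : Finset V) : 2 * inducedEdgeCnt G X = ∑ x ∈ X, #{y ∈ X | G.Adj x y} := by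
  classical
  have hnbr (x : V) : (induceOn G X).neighborFinset x =
      if x ∈ X then {y ∈ X | G.Adj x y} else ∅ := by
    ext y
    rw [SimpleGraph.mem_neighborFinset]
    split_ifs with hx <;> simp [induceOn, hx, and_comm]
  rw [inducedEdgeCnt_eq_ncard_induceOn, ← SimpleGraph.coe_edgeFinset, Set.ncard_coe_finset,
    ← SimpleGraph.sum_degrees_eq_twice_card_edges, ← Fintype.sum_ite_mem X]
  refine Finset.sum_congr rfl fun x _ => ?_
  rw [← SimpleGraph.card_neighborFinset_eq_degree, hnbr]
  split_ifs <;> simp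

lemma inducedEdgeCnt_le_card_sym2 (G : SimpleGraph V) (X : Finset V) :
    inducedEdgeCnt G X ≤ Fintype.card (Sym2 V) :=
  (Set.ncard_le_card _).trans_eq Nat.card_eq_fintype_card

lemma two_mul_inducedEdgeCnt_div_card_le (G : SimpleGraph V) {X : Finset V} (hX : X.Nonempty) :
    2 * (inducedEdgeCnt G X : ℝ) / #X ≤ 2 * Fintype.card (Sym2 V) := by
  have hcard : (1 : ℝ) ≤ #X := by exact_mod_cast hX.card_pos
  calc 2 * (inducedEdgeCnt G X : ℝ) / #X ≤ 2 * inducedEdgeCnt G X :=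
        div_le_self (by positivity) hcard
    _ ≤ 2 * Fintype.card (Sym2 V) := by gcongr; exact_mod_cast inducedEdgeCnt_le_card_sym2 G X

lemma le_mad (G : SimpleGraph V) {X : Finset V} (hX : X.Nonempty) :
    2 * (inducedEdgeCnt G X : ℝ) / #X ≤ Mad G :=
  le_csSup ⟨_, by rintro d ⟨Y, hY, rfl⟩; exact two_mul_inducedEdgeCnt_div_card_le G hY⟩
    ⟨X, hX, rfl⟩

lemma mad_nonneg (G : SimpleGraph V) : 0 ≤ Mad G :=
  Real.sSup_nonneg fun _ ⟨_, _, hd⟩ => hd ▸ by positivity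

lemma mad_le_of_forall {G : SimpleGraph V} {c : ℝ} (hc : 0 ≤ c)
    (h : ∀ X : Finset V, X.Nonempty → 2 * (inducedEdgeCnt G X : ℝ) / #X ≤ c) :
    Mad G ≤ c :=
  Real.sSup_le (fun _ ⟨X, hX, hd⟩ => hd ▸ h X hX) hc

lemma mad_le_card_sym2 (G : SimpleGraph V) : Mad G ≤ 2 * Fintype.card (Sym2 V) :=
  mad_le_of_forall (by positivity) fun _ hX => two_mul_inducedEdgeCnt_div_card_le G hX

end Mad

section BlowUp

variable {V W : Type} [Fintype V] [Fintype W] [DecidableEq W] {f : V → W} {t : ℕ}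

lemma sum_comp_of_card_fiber {M : Type} [AddCommMonoid M] (hf : ∀ w, #{v | f v = w} = t)
    (g : W → M) : ∑ v, g (f v) = t • ∑ w, g w := by
  rw [← Finset.sum_fiberwise univ f, Finset.smul_sum]
  refine Finset.sum_congr rfl fun w _ => ?_
  rw [Finset.sum_congr rfl fun v hv => congrArg g (Finset.mem_filter.mp hv).2, sum_const, hf]

lemma card_filter_comp_of_card_fiber (hf : ∀ w, #{v | f v = w} = t) (p : W → Prop)
    [DecidablePred p] : #{v | p (f v)} = t * #{w | p w} := by
  simp only [card_filter]
  exact sum_comp_of_card_fiber hf fun w => if p w then 1 else 0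

lemma card_preimage_of_card_fiber (hf : ∀ w, #{v | f v = w} = t) (X : Finset W) :
    #{v | f v ∈ X} = t * #X := by
  rw [card_filter_comp_of_card_fiber hf (· ∈ X), filter_mem_eq_inter, univ_inter]

lemma inducedEdgeCnt_comap_preimage (hf : ∀ w, #{v | f v = w} = t) (G : SimpleGraph W)
    (X : Finset W) : inducedEdgeCnt (G.comap f) {v | f v ∈ X} = t * t * inducedEdgeCnt G X := by
  classical
  suffices 2 * inducedEdgeCnt (G.comap f) {v | f v ∈ X} = t * t * (2 * inducedEdgeCnt G X) by
    linarith
  have hnbr (v : V) :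
      #{u ∈ {v | f v ∈ X} | G.Adj (f v) (f u)} = t * #{w ∈ X | G.Adj (f v) w} := by
    rw [filter_filter, card_filter_comp_of_card_fiber hf (fun w => w ∈ X ∧ G.Adj (f v) w),
      ← filter_filter, filter_mem_eq_inter, univ_inter]
  rw [two_mul_inducedEdgeCnt, two_mul_inducedEdgeCnt]
  calc ∑ v ∈ {v | f v ∈ X}, #{u ∈ {v | f v ∈ X} | (G.comap f).Adj v u}
      = ∑ v, if f v ∈ X then t * #{w ∈ X | G.Adj (f v) w} else 0 := by
        rw [sum_filter]; simp only [SimpleGraph.comap_adj, hnbr]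
    _ = t * ∑ w, if w ∈ X then t * #{w' ∈ X | G.Adj w w'} else 0 :=
        sum_comp_of_card_fiber hf fun w => if w ∈ X then t * #{w' ∈ X | G.Adj w w'} else 0
    _ = t * t * ∑ w ∈ X, #{w' ∈ X | G.Adj w w'} := by
        rw [Fintype.sum_ite_mem, ← mul_sum, mul_assoc]

lemma mul_mad_le_mad_comap (hf : ∀ w, #{v | f v = w} = t) (ht : 0 < t) (G : SimpleGraph W) :
    t * Mad G ≤ Mad (G.comap f) := by
  have htR : (0 : ℝ) < t := by exact_mod_cast ht
  rw [← le_div_iff₀' htR]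
  refine mad_le_of_forall (div_nonneg (mad_nonneg _) htR.le) fun X hX => ?_
  have hX' : ({v | f v ∈ X} : Finset V).Nonempty := by
    rw [← card_pos, card_preimage_of_card_fiber hf]
    exact Nat.mul_pos ht hX.card_pos
  have hXR : (0 : ℝ) < #X := by exact_mod_cast hX.card_pos
  calc 2 * (inducedEdgeCnt G X : ℝ) / #X
      = 2 * ((t * t * inducedEdgeCnt G X : ℕ) : ℝ) / ((t * #X : ℕ) : ℝ) / t := by
        push_cast; field_simp
    _ = 2 * (inducedEdgeCnt (G.comap f) {v | f v ∈ X} : ℝ) / #({v | f v ∈ X} : Finset V)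
          / t := by
        rw [inducedEdgeCnt_comap_preimage hf, card_preimage_of_card_fiber hf]
    _ ≤ Mad (G.comap f) / t := by gcongr; exact le_mad _ hX'

end BlowUp

section Decomposition

variable {k n : ℕ}

lemma isKDecomp_iff {G : Fin k → SimpleGraph (Fin n)} :
    IsKDecomp G ↔ (∀ x y, x ≠ y → ∃ i, (G i).Adj x y) ∧
      ∀ i j x y, (G i).Adj x y → (G j).Adj x y → i = j := by
  constructor
  · rintro ⟨hdisj, hcover⟩
    refine ⟨fun x y hxy => ?_, fun i j x y hi hj => ?_⟩
    · have hedge : s(x, y) ∈ (⊤ : SimpleGraph (Fin n)).edgeSet := hxy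
      simpa [← hcover] using hedge
    · by_contra hij
      exact Set.disjoint_left.mp (hdisj i j hij) ((G i).mem_edgeSet.mpr hi) hj
  · rintro ⟨hcover, huniq⟩
    refine ⟨fun i j hij => Set.disjoint_left.mpr fun e hi hj => ?_, ?_⟩
    · induction e with
      | _ x y => exact hij (huniq i j x y hi hj)
    · ext e
      induction e with
      | _ x y =>
        simp only [Set.mem_iUnion, SimpleGraph.mem_edgeSet, SimpleGraph.top_adj]
        exact ⟨fun ⟨i, hi⟩ => hi.ne, hcover x y⟩

lemma le_MSum {G : Fin k → SimpleGraph (Fin n)} (hG : IsKDecomp G) :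
    ∑ i, Mad (G i) ≤ MSum k n := by
  refine le_csSup ⟨k * (2 * Fintype.card (Sym2 (Fin n))), ?_⟩ ⟨G, hG, rfl⟩
  rintro _ ⟨H, -, rfl⟩
  simpa using sum_le_sum fun i (_ : i ∈ univ) => mad_le_card_sym2 (H i)

lemma MSum_le_of_forall (hk : 0 < k) {c : ℝ}
    (h : ∀ G : Fin k → SimpleGraph (Fin n), IsKDecomp G → ∑ i, Mad (G i) ≤ c) :
    MSum k n ≤ c := by
  classical
  refine csSup_le ⟨_, fun i => if i = ⟨0, hk⟩ then ⊤ else ⊥, ?_, rfl⟩ ?_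
  · rw [isKDecomp_iff]
    refine ⟨fun x y hxy => ⟨⟨0, hk⟩, by simpa using hxy⟩, fun i j x y hi hj => ?_⟩
    split_ifs at hi hj <;> simp_all
  · rintro _ ⟨G, hG, rfl⟩
    exact h G hG

end Decomposition

lemma sub_one_le_mad_cliqueOn {n : ℕ} (S : Finset (Fin n)) :
    (#S : ℝ) - 1 ≤ Mad (cliqueOn S) := by
  classical
  rcases S.eq_empty_or_nonempty with rfl | hS
  · rw [card_empty, Nat.cast_zero]
    linarith [mad_nonneg (cliqueOn (∅ : Finset (Fin n)))]
  have hedges : 2 * inducedEdgeCnt (cliqueOn S) S = #S * (#S - 1) := by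
    rw [two_mul_inducedEdgeCnt]
    calc ∑ x ∈ S, #{y ∈ S | (cliqueOn S).Adj x y} = ∑ x ∈ S, #(S.erase x) :=
          sum_congr rfl fun x hx => by congr 1; ext y; simp [cliqueOn, hx, ne_comm, and_comm]
      _ = #S * (#S - 1) := by
          rw [sum_congr rfl fun x hx => card_erase_of_mem hx, sum_const, smul_eq_mul]
  have hSR : (0 : ℝ) < #S := by exact_mod_cast hS.card_pos
  calc (#S : ℝ) - 1 = 2 * (inducedEdgeCnt (cliqueOn S) S : ℝ) / #S := by
        rw [eq_div_iff hSR.ne', ← Nat.cast_ofNat, ← Nat.cast_mul, hedges,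
          Nat.cast_mul, Nat.cast_sub hS.card_pos]
        push_cast; ring
    _ ≤ Mad (cliqueOn S) := le_mad _ hS

lemma card_filter_modNat_eq (t : ℕ) {b : ℕ} (u : Fin b) :
    #{x : Fin (t * b) | x.modNat = u} = t := by
  rw [card_filter, Fintype.sum_equiv finProdFinEquiv.symm (fun x => if x.modNat = u then 1 else 0)
    (fun p => if p.2 = u then 1 else 0) fun _ => rfl, Fintype.sum_prod_type]
  simp

section BlowUpDecomp

variable {a b : ℕ}

def blowUpDecomp (G : Fin a → SimpleGraph (Fin b)) (t : ℕ) :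
    Fin (a + b) → SimpleGraph (Fin (t * b)) :=
  Fin.append (fun i => (G i).comap Fin.modNat) (fun u => cliqueOn {x | x.modNat = u})

@[simp]
lemma blowUpDecomp_castAdd_adj (G : Fin a → SimpleGraph (Fin b)) (t : ℕ) (i : Fin a)
    (x y : Fin (t * b)) :
    (blowUpDecomp G t (Fin.castAdd b i)).Adj x y ↔ (G i).Adj x.modNat y.modNat := by
  simp [blowUpDecomp]

@[simp]
lemma blowUpDecomp_natAdd_adj (G : Fin a → SimpleGraph (Fin b)) (t : ℕ) (u : Fin b)
    (x y : Fin (t * b)) :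
    (blowUpDecomp G t (Fin.natAdd a u)).Adj x y ↔ x ≠ y ∧ x.modNat = u ∧ y.modNat = u := by
  simp [blowUpDecomp, cliqueOn, and_comm]

lemma isKDecomp_blowUpDecomp {G : Fin a → SimpleGraph (Fin b)} (hG : IsKDecomp G)
    (t : ℕ) : IsKDecomp (blowUpDecomp G t) := by
  rw [isKDecomp_iff] at hG ⊢
  obtain ⟨hcover, huniq⟩ := hG
  refine ⟨fun x y hxy => ?_, fun i j x y => ?_⟩
  · by_cases hxy' : x.modNat = y.modNat
    · exact ⟨Fin.natAdd a x.modNat, by simp [hxy, hxy']⟩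
    · obtain ⟨i, hi⟩ := hcover _ _ hxy'
      exact ⟨Fin.castAdd b i, by simpa using hi⟩
  intro hi hj
  induction i using Fin.addCases <;> induction j using Fin.addCases <;>
    simp only [blowUpDecomp_castAdd_adj, blowUpDecomp_natAdd_adj] at hi hj
  · rw [huniq _ _ _ _ hi hj]
  · exact absurd (hj.2.1.trans hj.2.2.symm) hi.ne
  · exact absurd (hi.2.1.trans hi.2.2.symm) hj.ne
  · rw [← hi.2.1, hj.2.1]

lemma sum_mad_blowUpDecomp (G : Fin a → SimpleGraph (Fin b)) {t : ℕ} (ht : 0 < t) :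
    t * ∑ i, Mad (G i) + b * ((t : ℝ) - 1) ≤ ∑ i, Mad (blowUpDecomp G t i) := by
  rw [Fin.sum_univ_add]
  simp only [blowUpDecomp, Fin.append_left, Fin.append_right]
  gcongr
  · rw [mul_sum]
    exact sum_le_sum fun i _ => mul_mad_le_mad_comap (card_filter_modNat_eq t) ht (G i)
  · calc (b : ℝ) * ((t : ℝ) - 1) = ∑ _u : Fin b, ((t : ℝ) - 1) := by
          rw [sum_const, card_univ, Fintype.card_fin, nsmul_eq_mul]
      _ ≤ _ := sum_le_sum fun u _ => by
        simpa [card_filter_modNat_eq] using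
          sub_one_le_mad_cliqueOn {x : Fin (t * b) | x.modNat = u}

end BlowUpDecomp

theorem madSum_recursive_lower_general (a b t : ℕ) (ht : 2 ≤ t) (ha : 1 ≤ a) :
    MSum (a + b) (t * b) ≥ (t : ℝ) * (MSum a b + (b : ℝ)) - (b : ℝ) := by
  have ht0 : 0 < t := by omega
  have htR : (0 : ℝ) < t := by exact_mod_cast ht0
  have hbound : MSum a b ≤ (MSum (a + b) (t * b) - b * ((t : ℝ) - 1)) / t :=
    MSum_le_of_forall ha fun G hG => by
      rw [le_div_iff₀' htR]
      linarith [sum_mad_blowUpDecomp G ht0, le_MSum (isKDecomp_blowUpDecomp hG t)]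
  rw [le_div_iff₀' htR] at hbound
  linarith

/-- recursive lower bound `M(a+b, t·b) ≥ t·(M(a,b)+b) − b`. -/
theorem madSum_recursive_lower (a b t : ℕ) (hb : 3 ≤ b) (ht : 2 ≤ t) (ha : 1 ≤ a)
    (hab : a ≤ Nat.choose b 2) :
    MSum (a + b) (t * b) ≥ (t : ℝ) * (MSum a b + (b : ℝ)) - (b : ℝ) :=
  madSum_recursive_lower_general a b t ht ha
end

section
/- For all integers n ≥ 2 and 1 ≤ k ≤ (n choose 2), the quantity ω(k,n) is equal to the largest number of edges of a bipartite graph with partite sets A and B, |A| = k and |B| = n, that contains no 4-cycle (equivalently, no two vertices of A have two common neighbors in B). -/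
/-- Clique number of a finite simple graph. -/
noncomputable def cliqNum {V : Type} [Fintype V] (G : SimpleGraph V) : ℕ :=
  sSup {m : ℕ | ∃ S : Finset V, G.IsNClique m S}

/-- `ω(k,n)`: maximum of `ω(G_1)+…+ω(G_k)` over all `k`-decompositions of `K_n`. -/
noncomputable def omegaSum (k n : ℕ) : ℕ :=
  sSup {s : ℕ | ∃ G : Fin k → SimpleGraph (Fin n), IsKDecomp G ∧ s = ∑ i, cliqNum (G i)}

lemma cliqSet_bdd {V : Type} [Fintype V] (G : SimpleGraph V) :
    BddAbove {m : ℕ | ∃ S : Finset V, G.IsNClique m S} := by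
  refine ⟨Fintype.card V, fun m hm => ?_⟩
  obtain ⟨S, hS⟩ := hm
  rw [← hS.card_eq]
  exact Finset.card_le_univ S

lemma cliqSet_nonempty {V : Type} [Fintype V] (G : SimpleGraph V) :
    {m : ℕ | ∃ S : Finset V, G.IsNClique m S}.Nonempty :=
  ⟨0, ∅, by simp⟩

lemma exists_max_clique {V : Type} [Fintype V] (G : SimpleGraph V) :
    ∃ S : Finset V, G.IsNClique (cliqNum G) S :=
  Nat.sSup_mem (cliqSet_nonempty G) (cliqSet_bdd G)

lemma cliqNum_le_card {V : Type} [Fintype V] (G : SimpleGraph V) :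
    cliqNum G ≤ Fintype.card V := by
  refine csSup_le (cliqSet_nonempty G) fun m hm => ?_
  obtain ⟨S, hS⟩ := hm
  rw [← hS.card_eq]
  exact Finset.card_le_univ S

lemma card_le_cliqNum {V : Type} [Fintype V] {G : SimpleGraph V} {S : Finset V}
    (h : G.IsClique ↑S) : S.card ≤ cliqNum G :=
  le_csSup (cliqSet_bdd G) ⟨S, h, rfl⟩

lemma count_pairs {k n : ℕ} (S : Fin k → Finset (Fin n)) :
    {p : Fin k × Fin n | p.2 ∈ S p.1}.ncard = ∑ a, (S a).card := by
  classical
  have h : {p : Fin k × Fin n | p.2 ∈ S p.1}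
      = ↑(Finset.univ.filter fun p : Fin k × Fin n => p.2 ∈ S p.1) := by
    ext p; simp
  rw [h, Set.ncard_coe_finset, Finset.card_filter, Fintype.sum_prod_type]
  simp

lemma cliqueOn_adj {n : ℕ} (S : Finset (Fin n)) (x y : Fin n) :
    (cliqueOn S).Adj x y ↔ x ≠ y ∧ x ∈ S ∧ y ∈ S := by
  simp only [cliqueOn, SimpleGraph.fromRel_adj]
  tauto

lemma disjoint_of_adj {V : Type} {G H : SimpleGraph V}
    (h : ∀ x y, G.Adj x y → H.Adj x y → False) : Disjoint G H := by
  rw [disjoint_iff]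
  ext x y
  simp only [SimpleGraph.inf_adj, SimpleGraph.bot_adj, iff_false, not_and]
  exact h x y

/-- `ω(k,n)` equals the Zarankiewicz number: the maximum number of
edges of a `C₄`-free bipartite graph with parts of sizes `k` and `n`. -/
theorem omegaSum_eq_zarankiewicz (n k : ℕ) (hn : 2 ≤ n) (hk1 : 1 ≤ k)
    (hk : k ≤ Nat.choose n 2) :
    omegaSum k n =
      sSup {m : ℕ | ∃ R : Fin k → Fin n → Prop,
        (∀ a₁ a₂ : Fin k, ∀ b₁ b₂ : Fin n, a₁ ≠ a₂ → b₁ ≠ b₂ →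
          ¬(R a₁ b₁ ∧ R a₁ b₂ ∧ R a₂ b₁ ∧ R a₂ b₂)) ∧
        m = {p : Fin k × Fin n | R p.1 p.2}.ncard} := by
  classical
  haveI : NeZero k := ⟨by omega⟩
  set Z : Set ℕ := {m : ℕ | ∃ R : Fin k → Fin n → Prop,
        (∀ a₁ a₂ : Fin k, ∀ b₁ b₂ : Fin n, a₁ ≠ a₂ → b₁ ≠ b₂ →
          ¬(R a₁ b₁ ∧ R a₁ b₂ ∧ R a₂ b₁ ∧ R a₂ b₂)) ∧
        m = {p : Fin k × Fin n | R p.1 p.2}.ncard} with hZ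
  set A : Set ℕ := {s : ℕ | ∃ G : Fin k → SimpleGraph (Fin n),
      IsKDecomp G ∧ s = ∑ i, cliqNum (G i)} with hA
  have hZbdd : BddAbove Z := by
    refine ⟨k * n, fun m hm => ?_⟩
    obtain ⟨R, -, hm⟩ := hm
    calc m = {p : Fin k × Fin n | R p.1 p.2}.ncard := hm
      _ ≤ (Set.univ : Set (Fin k × Fin n)).ncard :=
        Set.ncard_le_ncard (Set.subset_univ _) Set.finite_univ
      _ = k * n := by simp [Set.ncard_univ]
  have hAbdd : BddAbove A := by
    refine ⟨k * n, fun s hs => ?_⟩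
    obtain ⟨G, -, rfl⟩ := hs
    calc ∑ i, cliqNum (G i) ≤ ∑ _i : Fin k, n := by
          refine Finset.sum_le_sum fun i _ => ?_
          simpa using cliqNum_le_card (G i)
      _ = k * n := by simp [mul_comm]
  -- trivial decomposition
  have hAne : A.Nonempty := by
    refine ⟨∑ i, cliqNum ((fun i : Fin k => if i = 0 then (⊤ : SimpleGraph (Fin n)) else ⊥) i),
      (fun i : Fin k => if i = 0 then ⊤ else ⊥), ⟨?_, ?_⟩, rfl⟩
    · intro i j hij
      rcases eq_or_ne j 0 with hj | hj
      · have hi : i ≠ 0 := hj ▸ hij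
        simp [hi]
      · simp [hj]
    · apply Set.Subset.antisymm
      · exact Set.iUnion_subset fun i => SimpleGraph.edgeSet_mono le_top
      · intro e he
        exact Set.mem_iUnion.2 ⟨0, by simpa using he⟩
  refine le_antisymm ?_ ?_
  · -- omegaSum ≤ sSup Z
    refine csSup_le hAne fun s hs => ?_
    obtain ⟨G, hG, rfl⟩ := hs
    choose S hS using fun i => exists_max_clique (G i)
    refine le_csSup hZbdd ?_
    refine ⟨fun a b => b ∈ S a, ?_, ?_⟩
    · rintro a₁ a₂ b₁ b₂ ha hb ⟨h11, h12, h21, h22⟩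
      have e1 : s(b₁, b₂) ∈ (G a₁).edgeSet := (hS a₁).1 h11 h12 hb
      have e2 : s(b₁, b₂) ∈ (G a₂).edgeSet := (hS a₂).1 h21 h22 hb
      exact Set.disjoint_left.1 (hG.1 a₁ a₂ ha) e1 e2
    · rw [count_pairs]
      exact Finset.sum_congr rfl fun i _ => ((hS i).2).symm
  · -- sSup Z ≤ omegaSum
    refine csSup_le ⟨0, fun _ _ => False, by simp, by simp⟩ fun m hm => ?_
    obtain ⟨R, hR, rfl⟩ := hm
    set B : Fin k → Finset (Fin n) := fun a => Finset.univ.filter (fun b => R a b) with hB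
    have hRB : ∀ a b, R a b ↔ b ∈ B a := by intro a b; simp [hB]
    have hcount : {p : Fin k × Fin n | R p.1 p.2}.ncard = ∑ a, (B a).card := by
      rw [show {p : Fin k × Fin n | R p.1 p.2} = {p : Fin k × Fin n | p.2 ∈ B p.1} by
        ext p; exact hRB p.1 p.2, count_pairs]
    set K : SimpleGraph (Fin n) := ⨆ a, cliqueOn (B a) with hK
    set H : Fin k → SimpleGraph (Fin n) :=
      fun a => if a = 0 then cliqueOn (B 0) ⊔ Kᶜ else cliqueOn (B a) with hH
    have hkey : ∀ a a' : Fin k, a ≠ a' → Disjoint (cliqueOn (B a)) (cliqueOn (B a')) := by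
      intro a a' ha
      refine disjoint_of_adj fun x y hx hy => ?_
      rw [cliqueOn_adj] at hx hy
      exact hR a a' x y ha hx.1 ⟨(hRB a x).2 hx.2.1, (hRB a y).2 hx.2.2,
        (hRB a' x).2 hy.2.1, (hRB a' y).2 hy.2.2⟩
    have hle : ∀ a, cliqueOn (B a) ≤ H a := by
      intro a
      rcases eq_or_ne a 0 with rfl | ha
      · simp [hH, le_sup_left]
      · simp [hH, ha]
    have hKdis : ∀ a : Fin k, Disjoint Kᶜ (cliqueOn (B a)) :=
      fun a => disjoint_compl_left.mono_right (le_iSup (fun a => cliqueOn (B a)) a)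
    have hdecomp : IsKDecomp H := by
      constructor
      · intro i j hij
        rw [SimpleGraph.disjoint_edgeSet]
        rcases eq_or_ne i 0 with rfl | hi
        · have hj : j ≠ 0 := fun h => hij h.symm
          simp only [hH, if_pos rfl, if_neg hj]
          exact disjoint_sup_left.2 ⟨hkey 0 j hij, hKdis j⟩
        · rcases eq_or_ne j 0 with rfl | hj
          · simp only [hH, if_pos rfl, if_neg hi]
            exact (disjoint_sup_left.2 ⟨hkey 0 i hij.symm, hKdis i⟩).symm
          · simp only [hH, if_neg hi, if_neg hj]
            exact hkey i j hij
      · apply Set.Subset.antisymm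
        · exact Set.iUnion_subset fun i => SimpleGraph.edgeSet_mono le_top
        · intro e he
          induction e with
          | h x y =>
            rw [SimpleGraph.mem_edgeSet, SimpleGraph.top_adj] at he
            by_cases hxy : K.Adj x y
            · obtain ⟨a, ha⟩ := SimpleGraph.iSup_adj.1 hxy
              exact Set.mem_iUnion.2 ⟨a, (hle a) ha⟩
            · refine Set.mem_iUnion.2 ⟨0, ?_⟩
              have : (H 0).Adj x y := by
                simp only [hH, if_pos rfl, SimpleGraph.sup_adj]
                exact Or.inr ((SimpleGraph.compl_adj K x y).2 ⟨he, hxy⟩)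
              exact this
    have hsA : (∑ i, cliqNum (H i)) ∈ A := ⟨H, hdecomp, rfl⟩
    refine le_trans ?_ (le_csSup hAbdd hsA)
    rw [hcount]
    refine Finset.sum_le_sum fun a _ => ?_
    refine card_le_cliqNum ?_
    intro x hx y hy hxy
    exact hle a ((cliqueOn_adj (B a) x y).2 ⟨hxy, hx, hy⟩)
end
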